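/- Let (H, B, φ) be a Hopf bracoid over a field K such that φ is a coalgebra morphism and H is cocommutative, and define Φ'(h ⊗ b) := Σ φ(h₍₁₎ ⊗ b) · S_B(u(h₍₂₎)), where u(h) := φ(h ⊗ 1_B). Then Φ' : H ⊗ B → B is a coalgebra morphism: ε_B(Φ'(h ⊗ b)) = ε_H(h) ε_B(b) and δ_B(Φ'(h ⊗ b)) = Σ Φ'(h₍₁₎ ⊗ b₍₁₎) ⊗ Φ'(h₍₂₎ ⊗ b₍₂₎). -/

import Mathlib

open TensorProduct LinearMap

noncomputable section

namespace HopfAux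

open Coalgebra

section Helpers

variable {K : Type*} [CommSemiring K]

section Coalg
variable {A : Type*} [AddCommMonoid A] [Module K A] [Coalgebra K A]

lemma sum_apply_repr {x : A} (r : Coalgebra.Repr K x (A × A)) {M : Type*} [AddCommMonoid M] [Module K M]
    (g : A ⊗[K] A →ₗ[K] M) :
    ∑ i ∈ r.index, g (r.left i ⊗ₜ[K] r.right i) = g (Coalgebra.comul (R := K) x) := by
  rw [← r.eq, map_sum]

lemma sum_counit_smul {x : A} (r : Coalgebra.Repr K x (A × A)) :
    ∑ i ∈ r.index, Coalgebra.counit (R := K) (r.left i) • r.right i = x := by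
  have h := congrArg (TensorProduct.lid K A) (Coalgebra.sum_counit_tmul_eq (R := K) r)
  rw [map_sum] at h
  simpa only [TensorProduct.lid_tmul, one_smul] using h

lemma sum_smul_counit {x : A} (r : Coalgebra.Repr K x (A × A)) :
    ∑ i ∈ r.index, Coalgebra.counit (R := K) (r.right i) • r.left i = x := by
  have h := congrArg (TensorProduct.rid K A) (Coalgebra.sum_tmul_counit_eq (R := K) r)
  rw [map_sum] at h
  simpa only [TensorProduct.rid_tmul, one_smul] using h

lemma sum_counit_mul_counit {x : A} (r : Coalgebra.Repr K x (A × A)) :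
    ∑ i ∈ r.index,
      Coalgebra.counit (R := K) (r.left i) * Coalgebra.counit (R := K) (r.right i)
      = Coalgebra.counit (R := K) x := by
  have h := congrArg (Coalgebra.counit (R := K)) (sum_counit_smul r)
  simpa [map_sum, smul_eq_mul] using h

lemma flip_comul (hcoc : ∀ y : A, (TensorProduct.comm K A A) (Coalgebra.comul (R := K) y)
      = Coalgebra.comul (R := K) y) {x : A} (r : Coalgebra.Repr K x (A × A)) :
    ∑ i ∈ r.index, r.right i ⊗ₜ[K] r.left i = Coalgebra.comul (R := K) x := by
  have h := congrArg (TensorProduct.comm K A A) r.eq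
  rw [map_sum] at h
  simpa only [TensorProduct.comm_tmul, hcoc x] using h

lemma sum_flip_apply (hcoc : ∀ y : A, (TensorProduct.comm K A A) (Coalgebra.comul (R := K) y)
      = Coalgebra.comul (R := K) y) {x : A} (r : Coalgebra.Repr K x (A × A))
    {M : Type*} [AddCommMonoid M] [Module K M] (g : A ⊗[K] A →ₗ[K] M) :
    ∑ i ∈ r.index, g (r.left i ⊗ₜ[K] r.right i)
      = ∑ i ∈ r.index, g (r.right i ⊗ₜ[K] r.left i) := by
  rw [← map_sum, ← map_sum, r.eq, flip_comul hcoc r]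

lemma delta4 {x : A} (r : Coalgebra.Repr K x (A × A))
    (p : (i : r.ι) → Coalgebra.Repr K (r.left i) (A × A))
    (q : (i : r.ι) → Coalgebra.Repr K (r.right i) (A × A))
    (v : (i : r.ι) → (l : (q i).ι) → Coalgebra.Repr K ((q i).left l) (A × A)) :
    ∑ i ∈ r.index, ∑ j ∈ (p i).index, ∑ l ∈ (q i).index,
      (p i).left j ⊗ₜ[K] ((p i).right j ⊗ₜ[K] ((q i).left l ⊗ₜ[K] (q i).right l))
    = ∑ i ∈ r.index, ∑ l ∈ (q i).index, ∑ m ∈ (v i l).index,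
      r.left i ⊗ₜ[K] ((v i l).left m ⊗ₜ[K] ((v i l).right m ⊗ₜ[K] (q i).right l)) := by
  let w : (i : r.ι) → (l : (q i).ι) → Coalgebra.Repr K ((q i).right l) (A × A) :=
    fun i l => Coalgebra.Repr.arbitrary K _
  have E := congrArg
    (LinearMap.lTensor A (LinearMap.lTensor A (Coalgebra.comul (R := K))))
    (Coalgebra.sum_tmul_tmul_eq (R := K) r p q)
  simp only [map_sum, lTensor_tmul] at E
  have EL : ∑ i ∈ r.index, ∑ j ∈ (p i).index,
      (p i).left j ⊗ₜ[K] ((p i).right j ⊗ₜ[K] (Coalgebra.comul (R := K) (r.right i)))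
      = ∑ i ∈ r.index, ∑ j ∈ (p i).index, ∑ l ∈ (q i).index,
      (p i).left j ⊗ₜ[K] ((p i).right j ⊗ₜ[K] ((q i).left l ⊗ₜ[K] (q i).right l)) := by
    refine Finset.sum_congr rfl fun i _ => Finset.sum_congr rfl fun j _ => ?_
    rw [← (q i).eq, tmul_sum, tmul_sum]
  have ER : ∑ i ∈ r.index, ∑ l ∈ (q i).index,
      r.left i ⊗ₜ[K] ((q i).left l ⊗ₜ[K] (Coalgebra.comul (R := K) ((q i).right l)))
      = ∑ i ∈ r.index, ∑ l ∈ (q i).index, ∑ m ∈ (w i l).index,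
      r.left i ⊗ₜ[K] ((q i).left l ⊗ₜ[K] ((w i l).left m ⊗ₜ[K] (w i l).right m)) := by
    refine Finset.sum_congr rfl fun i _ => Finset.sum_congr rfl fun l _ => ?_
    rw [← (w i l).eq, tmul_sum, tmul_sum]
  rw [EL, ER] at E
  rw [E]
  refine Finset.sum_congr rfl fun i _ => ?_
  have C3i := Coalgebra.sum_tmul_tmul_eq (R := K) (q i) (v i) (w i)
  calc ∑ l ∈ (q i).index, ∑ m ∈ (w i l).index,
        r.left i ⊗ₜ[K] ((q i).left l ⊗ₜ[K] ((w i l).left m ⊗ₜ[K] (w i l).right m))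
      = r.left i ⊗ₜ[K] (∑ l ∈ (q i).index, ∑ m ∈ (w i l).index,
          (q i).left l ⊗ₜ[K] ((w i l).left m ⊗ₜ[K] (w i l).right m)) := by
        rw [tmul_sum]
        exact Finset.sum_congr rfl fun l _ => by rw [tmul_sum]
    _ = r.left i ⊗ₜ[K] (∑ l ∈ (q i).index, ∑ m ∈ (v i l).index,
          (v i l).left m ⊗ₜ[K] ((v i l).right m ⊗ₜ[K] (q i).right l)) := by
        rw [← C3i]
    _ = ∑ l ∈ (q i).index, ∑ m ∈ (v i l).index,
          r.left i ⊗ₜ[K] ((v i l).left m ⊗ₜ[K] ((v i l).right m ⊗ₜ[K] (q i).right l)) := by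
        rw [tmul_sum]
        exact Finset.sum_congr rfl fun l _ => by rw [tmul_sum]

end Coalg

section Conv
variable {C A : Type*} [AddCommMonoid C] [Module K C] [Coalgebra K C]
  [Semiring A] [Algebra K A]

/-- Convolution product. -/
def conv (f g : C →ₗ[K] A) : C →ₗ[K] A :=
  LinearMap.mul' K A ∘ₗ TensorProduct.map f g ∘ₗ Coalgebra.comul (R := K)

/-- Convolution unit. -/
def convUnit : C →ₗ[K] A := Algebra.linearMap K A ∘ₗ Coalgebra.counit (R := K)

lemma conv_repr (f g : C →ₗ[K] A) {x : C} (r : Coalgebra.Repr K x (C × C)) :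
    conv f g x = ∑ i ∈ r.index, f (r.left i) * g (r.right i) := by
  simp only [conv, coe_comp, Function.comp_apply, ← r.eq, map_sum,
    TensorProduct.map_tmul, mul'_apply]

lemma conv_unit_right (f : C →ₗ[K] A) : conv f convUnit = f := by
  ext x
  obtain r : Coalgebra.Repr K x (C × C) := Coalgebra.Repr.arbitrary K x
  rw [conv_repr f convUnit r]
  calc ∑ i ∈ r.index, f (r.left i) * convUnit (r.right i)
      = ∑ i ∈ r.index, Coalgebra.counit (R := K) (r.right i) • f (r.left i) := by
        refine Finset.sum_congr rfl fun i _ => ?_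
        simp [convUnit, Algebra.algebraMap_eq_smul_one, mul_smul_comm]
    _ = ∑ i ∈ r.index, f (Coalgebra.counit (R := K) (r.right i) • r.left i) := by
        exact Finset.sum_congr rfl fun i _ => (f.map_smul _ _).symm
    _ = f x := by rw [← map_sum]; exact congrArg f (sum_smul_counit r)

lemma conv_unit_left (f : C →ₗ[K] A) : conv convUnit f = f := by
  ext x
  obtain r : Coalgebra.Repr K x (C × C) := Coalgebra.Repr.arbitrary K x
  rw [conv_repr convUnit f r]
  calc ∑ i ∈ r.index, convUnit (r.left i) * f (r.right i)
      = ∑ i ∈ r.index, Coalgebra.counit (R := K) (r.left i) • f (r.right i) := by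
        refine Finset.sum_congr rfl fun i _ => ?_
        simp [convUnit, Algebra.algebraMap_eq_smul_one, smul_mul_assoc]
    _ = ∑ i ∈ r.index, f (Coalgebra.counit (R := K) (r.left i) • r.right i) := by
        exact Finset.sum_congr rfl fun i _ => (f.map_smul _ _).symm
    _ = f x := by rw [← map_sum]; exact congrArg f (sum_counit_smul r)

lemma conv_assoc (f g h : C →ₗ[K] A) : conv (conv f g) h = conv f (conv g h) := by
  ext x
  obtain r : Coalgebra.Repr K x (C × C) := Coalgebra.Repr.arbitrary K x
  let p : (i : r.ι) → Coalgebra.Repr K (r.left i) (C × C) := fun i => Coalgebra.Repr.arbitrary K _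
  let q : (i : r.ι) → Coalgebra.Repr K (r.right i) (C × C) := fun i => Coalgebra.Repr.arbitrary K _
  have E := Coalgebra.sum_map_tmul_tmul_eq (R := K) f g h x (repr := r) (a₁ := p) (a₂ := q)
  have E2 := congrArg (LinearMap.mul' K A ∘ₗ LinearMap.lTensor A (LinearMap.mul' K A)) E
  simp only [map_sum, coe_comp, Function.comp_apply, lTensor_tmul, mul'_apply] at E2
  rw [conv_repr (conv f g) h r, conv_repr f (conv g h) r]
  calc ∑ i ∈ r.index, conv f g (r.left i) * h (r.right i)
      = ∑ i ∈ r.index, ∑ j ∈ (p i).index,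
          f ((p i).left j) * (g ((p i).right j) * h (r.right i)) := by
        refine Finset.sum_congr rfl fun i _ => ?_
        rw [conv_repr f g (p i), Finset.sum_mul]
        exact Finset.sum_congr rfl fun j _ => mul_assoc _ _ _
    _ = ∑ i ∈ r.index, ∑ j ∈ (q i).index,
          f (r.left i) * (g ((q i).left j) * h ((q i).right j)) := E2.symm
    _ = ∑ i ∈ r.index, f (r.left i) * conv g h (r.right i) := by
        refine Finset.sum_congr rfl fun i _ => ?_
        rw [conv_repr g h (q i), Finset.mul_sum]

lemma conv_inv_unique {f g g' : C →ₗ[K] A} (h1 : conv f g = convUnit)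
    (h2 : conv g' f = convUnit) : g = g' := by
  calc g = conv convUnit g := (conv_unit_left g).symm
    _ = conv (conv g' f) g := by rw [h2]
    _ = conv g' (conv f g) := conv_assoc g' f g
    _ = conv g' convUnit := by rw [h1]
    _ = g' := conv_unit_right g'

end Conv

section Hopf
variable {A : Type*} [Semiring A] [HopfAlgebra K A]

lemma counit_antipode (x : A) :
    Coalgebra.counit (R := K) (HopfAlgebra.antipode (R := K) x)
      = Coalgebra.counit (R := K) x := by
  obtain r : Coalgebra.Repr K x (A × A) := Coalgebra.Repr.arbitrary K x
  have h1 := congrArg (Coalgebra.counit (R := K))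
    (HopfAlgebra.sum_antipode_mul_eq_smul (R := K) r)
  simp only [map_sum, Bialgebra.counit_mul, map_smul, Bialgebra.counit_one,
    smul_eq_mul, mul_one] at h1
  have h2 := congrArg (fun y => Coalgebra.counit (R := K) (HopfAlgebra.antipode (R := K) y))
    (sum_smul_counit r)
  simp only [map_sum, map_smul, smul_eq_mul] at h2
  rw [← h2, ← h1]
  exact Finset.sum_congr rfl fun i _ => mul_comm _ _

lemma conv_comul_comulAntipode :
    conv (Coalgebra.comul (R := K) (A := A))
      (Coalgebra.comul (R := K) ∘ₗ HopfAlgebra.antipode (R := K)) = convUnit := by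
  ext x
  obtain r : Coalgebra.Repr K x (A × A) := Coalgebra.Repr.arbitrary K x
  rw [conv_repr _ _ r]
  calc ∑ i ∈ r.index, Coalgebra.comul (R := K) (r.left i) *
        (Coalgebra.comul (R := K) ∘ₗ HopfAlgebra.antipode (R := K)) (r.right i)
      = ∑ i ∈ r.index,
          Coalgebra.comul (R := K) (r.left i * HopfAlgebra.antipode (R := K) (r.right i)) := by
        refine Finset.sum_congr rfl fun i _ => ?_
        rw [coe_comp, Function.comp_apply, Bialgebra.comul_mul]
    _ = Coalgebra.comul (R := K)
          (∑ i ∈ r.index, r.left i * HopfAlgebra.antipode (R := K) (r.right i)) := by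
        rw [map_sum]
    _ = Coalgebra.comul (R := K) (Coalgebra.counit (R := K) x • (1 : A)) := by
        rw [HopfAlgebra.sum_mul_antipode_eq_smul r]
    _ = convUnit x := by
        simp [convUnit, Algebra.algebraMap_eq_smul_one]

lemma conv_antiComul_comul :
    conv (TensorProduct.map (HopfAlgebra.antipode (R := K)) (HopfAlgebra.antipode (R := K))
        ∘ₗ (TensorProduct.comm K A A).toLinearMap ∘ₗ Coalgebra.comul (R := K))
      (Coalgebra.comul (R := K) (A := A)) = convUnit := by
  ext x
  obtain r : Coalgebra.Repr K x (A × A) := Coalgebra.Repr.arbitrary K x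
  let p : (i : r.ι) → Coalgebra.Repr K (r.left i) (A × A) := fun i => Coalgebra.Repr.arbitrary K _
  let q : (i : r.ι) → Coalgebra.Repr K (r.right i) (A × A) := fun i => Coalgebra.Repr.arbitrary K _
  let v : (i : r.ι) → (l : (q i).ι) → Coalgebra.Repr K ((q i).left l) (A × A) :=
    fun i l => Coalgebra.Repr.arbitrary K _
  let Ψ : A ⊗[K] (A ⊗[K] (A ⊗[K] A)) →ₗ[K] A ⊗[K] A :=
    TensorProduct.map
        (LinearMap.mul' K A ∘ₗ LinearMap.rTensor A (HopfAlgebra.antipode (R := K)))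
        (LinearMap.mul' K A ∘ₗ LinearMap.rTensor A (HopfAlgebra.antipode (R := K)))
      ∘ₗ (TensorProduct.tensorTensorTensorComm K A A A A).toLinearMap
      ∘ₗ LinearMap.rTensor (A ⊗[K] A) (TensorProduct.comm K A A).toLinearMap
      ∘ₗ (TensorProduct.assoc K A A (A ⊗[K] A)).symm.toLinearMap
  have hΨ : ∀ a b c d : A, Ψ (a ⊗ₜ[K] (b ⊗ₜ[K] (c ⊗ₜ[K] d)))
      = (HopfAlgebra.antipode (R := K) b * c) ⊗ₜ[K] (HopfAlgebra.antipode (R := K) a * d) := by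
    intro a b c d
    simp [Ψ, TensorProduct.assoc_symm_tmul, TensorProduct.comm_tmul,
      TensorProduct.tensorTensorTensorComm_tmul, mul'_apply]
  have hD := congrArg Ψ (delta4 r p q v)
  simp only [map_sum] at hD
  rw [conv_repr _ _ r]
  calc ∑ i ∈ r.index,
        (TensorProduct.map (HopfAlgebra.antipode (R := K)) (HopfAlgebra.antipode (R := K))
          ∘ₗ (TensorProduct.comm K A A).toLinearMap ∘ₗ Coalgebra.comul (R := K)) (r.left i)
        * Coalgebra.comul (R := K) (r.right i)
      = ∑ i ∈ r.index, ∑ j ∈ (p i).index, ∑ l ∈ (q i).index,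
          Ψ ((p i).left j ⊗ₜ[K] ((p i).right j ⊗ₜ[K] ((q i).left l ⊗ₜ[K] (q i).right l))) := by
        refine Finset.sum_congr rfl fun i _ => ?_
        rw [coe_comp, Function.comp_apply, coe_comp, Function.comp_apply]
        rw [LinearEquiv.coe_coe, ← (p i).eq, ← (q i).eq]
        rw [map_sum, map_sum]
        simp only [TensorProduct.comm_tmul, TensorProduct.map_tmul]
        rw [Finset.sum_mul_sum]
        refine Finset.sum_congr rfl fun j _ => Finset.sum_congr rfl fun l _ => ?_
        rw [hΨ, Algebra.TensorProduct.tmul_mul_tmul]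
    _ = ∑ i ∈ r.index, ∑ l ∈ (q i).index, ∑ m ∈ (v i l).index,
          Ψ (r.left i ⊗ₜ[K] ((v i l).left m ⊗ₜ[K] ((v i l).right m ⊗ₜ[K] (q i).right l))) := hD
    _ = ∑ i ∈ r.index,
          (1 : A) ⊗ₜ[K] (HopfAlgebra.antipode (R := K) (r.left i) * r.right i) := by
        refine Finset.sum_congr rfl fun i _ => ?_
        calc ∑ l ∈ (q i).index, ∑ m ∈ (v i l).index,
              Ψ (r.left i ⊗ₜ[K] ((v i l).left m ⊗ₜ[K] ((v i l).right m ⊗ₜ[K] (q i).right l)))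
            = ∑ l ∈ (q i).index,
                (1 : A) ⊗ₜ[K] (HopfAlgebra.antipode (R := K) (r.left i) *
                  (Coalgebra.counit (R := K) ((q i).left l) • (q i).right l)) := by
              refine Finset.sum_congr rfl fun l _ => ?_
              calc ∑ m ∈ (v i l).index,
                    Ψ (r.left i ⊗ₜ[K] ((v i l).left m ⊗ₜ[K] ((v i l).right m ⊗ₜ[K] (q i).right l)))
                  = (∑ m ∈ (v i l).index,
                      HopfAlgebra.antipode (R := K) ((v i l).left m) * (v i l).right m) ⊗ₜ[K]
                      (HopfAlgebra.antipode (R := K) (r.left i) * (q i).right l) := by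
                    rw [TensorProduct.sum_tmul]
                    exact Finset.sum_congr rfl fun m _ => hΨ _ _ _ _
                _ = (Coalgebra.counit (R := K) ((q i).left l) • (1 : A)) ⊗ₜ[K]
                      (HopfAlgebra.antipode (R := K) (r.left i) * (q i).right l) := by
                    rw [HopfAlgebra.sum_antipode_mul_eq_smul (v i l)]
                _ = (1 : A) ⊗ₜ[K] (HopfAlgebra.antipode (R := K) (r.left i) *
                      (Coalgebra.counit (R := K) ((q i).left l) • (q i).right l)) := by
                    rw [TensorProduct.smul_tmul, mul_smul_comm]
            _ = (1 : A) ⊗ₜ[K] (HopfAlgebra.antipode (R := K) (r.left i) * r.right i) := by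
              rw [← TensorProduct.tmul_sum, ← Finset.mul_sum, sum_counit_smul (q i)]
    _ = (1 : A) ⊗ₜ[K] (Coalgebra.counit (R := K) x • (1 : A)) := by
        rw [← TensorProduct.tmul_sum, HopfAlgebra.sum_antipode_mul_eq_smul r]
    _ = convUnit x := by
        simp [convUnit, Algebra.algebraMap_eq_smul_one, Algebra.TensorProduct.one_def]

lemma comul_antipode (x : A) :
    Coalgebra.comul (R := K) (HopfAlgebra.antipode (R := K) x)
      = TensorProduct.map (HopfAlgebra.antipode (R := K)) (HopfAlgebra.antipode (R := K))
          ((TensorProduct.comm K A A) (Coalgebra.comul (R := K) x)) := by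
  have h := conv_inv_unique (conv_comul_comulAntipode (K := K) (A := A))
    (conv_antiComul_comul (K := K) (A := A))
  have := congrArg (fun f => f x) h
  simpa using this

end Hopf

end Helpers

end HopfAux

namespace HopfBracoidPaper

variable (K : Type*) [Field K]
variable (H B : Type*) [Ring H] [Ring B] [HopfAlgebra K H] [HopfAlgebra K B]

/-- `u(h) = φ(h ⊗ 1_B)`. -/
def uMap (φ : H ⊗[K] B →ₗ[K] B) : H →ₗ[K] B :=
  φ ∘ₗ (TensorProduct.mk K H B).flip 1

/-- `Φ(h ⊗ b) = Σ S_B(u(h₍₁₎)) · φ(h₍₂₎ ⊗ b)`. -/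
def PhiMap (φ : H ⊗[K] B →ₗ[K] B) : H ⊗[K] B →ₗ[K] B :=
  LinearMap.mul' K B
    ∘ₗ TensorProduct.map (HopfAlgebra.antipode (R := K) ∘ₗ uMap K H B φ) φ
    ∘ₗ (TensorProduct.assoc K H H B).toLinearMap
    ∘ₗ LinearMap.rTensor B (Coalgebra.comul (R := K))

/-- `(B, φ)` is a left `H`-module. -/
structure IsModuleAction (φ : H ⊗[K] B →ₗ[K] B) : Prop where
  one_act : ∀ b : B, φ ((1 : H) ⊗ₜ[K] b) = b
  mul_act : ∀ (h h' : H) (b : B), φ ((h * h') ⊗ₜ[K] b) = φ (h ⊗ₜ[K] φ (h' ⊗ₜ[K] b))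

/-- `(H, B, φ)` is a Hopf bracoid: `(B, φ)` is a left `H`-module and
`φ(h ⊗ b·b') = Σ φ(h₍₁₎ ⊗ b) · Φ(h₍₂₎ ⊗ b')`. -/
structure IsHopfBracoid (φ : H ⊗[K] B →ₗ[K] B) : Prop where
  one_act : ∀ b : B, φ ((1 : H) ⊗ₜ[K] b) = b
  mul_act : ∀ (h h' : H) (b : B), φ ((h * h') ⊗ₜ[K] b) = φ (h ⊗ₜ[K] φ (h' ⊗ₜ[K] b))
  compat : ∀ (h : H) (b b' : B),
    φ (h ⊗ₜ[K] (b * b')) =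
      (LinearMap.mul' K B
        ∘ₗ TensorProduct.map φ (PhiMap K H B φ)
        ∘ₗ (TensorProduct.tensorTensorTensorComm K H H B B).toLinearMap)
        ((Coalgebra.comul (R := K) h) ⊗ₜ[K] (b ⊗ₜ[K] b'))

/-- `φ : H ⊗ B → B` is a coalgebra morphism:
`ε_B(φ(h ⊗ b)) = ε_H(h) ε_B(b)` and
`δ_B(φ(h ⊗ b)) = Σ φ(h₍₁₎ ⊗ b₍₁₎) ⊗ φ(h₍₂₎ ⊗ b₍₂₎)`. -/
structure IsCoalgebraMorphism (φ : H ⊗[K] B →ₗ[K] B) : Prop where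
  counit_comp : ∀ (h : H) (b : B),
    Coalgebra.counit (R := K) (φ (h ⊗ₜ[K] b)) =
      Coalgebra.counit (R := K) h * Coalgebra.counit (R := K) b
  comul_comp : ∀ (h : H) (b : B),
    Coalgebra.comul (R := K) (φ (h ⊗ₜ[K] b)) =
      (TensorProduct.map φ φ)
        ((TensorProduct.tensorTensorTensorComm K H H B B)
          ((Coalgebra.comul (R := K) h) ⊗ₜ[K] (Coalgebra.comul (R := K) b)))

/-- `(B, ψ)` is a left `H`-module algebra. -/
structure IsModuleAlgebra (ψ : H ⊗[K] B →ₗ[K] B) : Prop where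
  one_act : ∀ b : B, ψ ((1 : H) ⊗ₜ[K] b) = b
  mul_act : ∀ (h h' : H) (b : B), ψ ((h * h') ⊗ₜ[K] b) = ψ (h ⊗ₜ[K] ψ (h' ⊗ₜ[K] b))
  act_one : ∀ h : H, ψ (h ⊗ₜ[K] (1 : B)) = Coalgebra.counit (R := K) h • (1 : B)
  act_mul : ∀ (h : H) (b b' : B),
    ψ (h ⊗ₜ[K] (b * b')) =
      (LinearMap.mul' K B
        ∘ₗ TensorProduct.map ψ ψ
        ∘ₗ (TensorProduct.tensorTensorTensorComm K H H B B).toLinearMap)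
        ((Coalgebra.comul (R := K) h) ⊗ₜ[K] (b ⊗ₜ[K] b'))

/-- `π : H → B` is a 1-cocycle with action `γ`. -/
structure IsOneCocycle (π : H →ₗ[K] B) (γ : H ⊗[K] B →ₗ[K] B) : Prop where
  moduleAlgebra : IsModuleAlgebra K H B γ
  counit_comp : ∀ h : H, Coalgebra.counit (R := K) (π h) = Coalgebra.counit (R := K) h
  comul_comp : ∀ h : H,
    Coalgebra.comul (R := K) (π h) = (TensorProduct.map π π) (Coalgebra.comul (R := K) h)
  cocycle : ∀ h g : H,
    π (h * g) =
      (LinearMap.mul' K B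
        ∘ₗ TensorProduct.map π γ
        ∘ₗ (TensorProduct.assoc K H H B).toLinearMap)
        ((Coalgebra.comul (R := K) h) ⊗ₜ[K] π g)


/-- `Φ'(h ⊗ b) = Σ φ(h₍₁₎ ⊗ b) · S_B(u(h₍₂₎))`. -/
def PhiMap' (φ : H ⊗[K] B →ₗ[K] B) : H ⊗[K] B →ₗ[K] B :=
  LinearMap.mul' K B
    ∘ₗ TensorProduct.map φ (HopfAlgebra.antipode (R := K) ∘ₗ uMap K H B φ)
    ∘ₗ (TensorProduct.assoc K H B H).symm.toLinearMap
    ∘ₗ LinearMap.lTensor H (TensorProduct.comm K H B).toLinearMap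
    ∘ₗ (TensorProduct.assoc K H H B).toLinearMap
    ∘ₗ LinearMap.rTensor B (Coalgebra.comul (R := K))

/-- `ψ(h ⊗ b) = Σ π(h₍₁₎) · γ(h₍₂₎ ⊗ b)`. -/
def psiMap (π : H →ₗ[K] B) (γ : H ⊗[K] B →ₗ[K] B) : H ⊗[K] B →ₗ[K] B :=
  LinearMap.mul' K B
    ∘ₗ TensorProduct.map π γ
    ∘ₗ (TensorProduct.assoc K H H B).toLinearMap
    ∘ₗ LinearMap.rTensor B (Coalgebra.comul (R := K))

/-- `Σ ψ(h₍₂₎ ⊗ b) ⊗ h₍₁₎ = Σ ψ(h₍₁₎ ⊗ b) ⊗ h₍₂₎` in `B ⊗ H`. -/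
def SatisfiesStarCondition (ψ : H ⊗[K] B →ₗ[K] B) : Prop :=
  ∀ (h : H) (b : B),
    ((TensorProduct.comm K H B).toLinearMap ∘ₗ LinearMap.lTensor H ψ)
      ((TensorProduct.assoc K H H B) ((Coalgebra.comul (R := K) h) ⊗ₜ[K] b)) =
    ((TensorProduct.comm K H B).toLinearMap ∘ₗ LinearMap.lTensor H ψ)
      ((TensorProduct.assoc K H H B)
        (((TensorProduct.comm K H H) (Coalgebra.comul (R := K) h)) ⊗ₜ[K] b))

/-- A Hopf algebra is cocommutative if `c ∘ δ = δ`. -/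
def IsCocommutative : Prop :=
  ∀ h : H, (TensorProduct.comm K H H) (Coalgebra.comul (R := K) h) = Coalgebra.comul (R := K) h

/-- `x` is a group-like element: `δ(x) = x ⊗ x` and `ε(x) = 1`. -/
def IsGroupLike (x : B) : Prop :=
  Coalgebra.counit (R := K) x = 1 ∧ Coalgebra.comul (R := K) x = x ⊗ₜ[K] x

/-- `Φᵒᵖ(h ⊗ b) = Σ φ(h₍₂₎ ⊗ b) · S_B(u(h₍₁₎))`: the `Φ`-map of `φ` with respect to the
opposite multiplication of `B`. -/
def PhiOpMap (φ : H ⊗[K] B →ₗ[K] B) : H ⊗[K] B →ₗ[K] B :=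
  LinearMap.mul' K B
    ∘ₗ (TensorProduct.comm K B B).toLinearMap
    ∘ₗ TensorProduct.map (HopfAlgebra.antipode (R := K) ∘ₗ uMap K H B φ) φ
    ∘ₗ (TensorProduct.assoc K H H B).toLinearMap
    ∘ₗ LinearMap.rTensor B (Coalgebra.comul (R := K))



section Aux

open Coalgebra HopfAux

variable {K H B}

lemma uMap_apply' (φ : H ⊗[K] B →ₗ[K] B) (h : H) :
    uMap K H B φ h = φ (h ⊗ₜ[K] (1 : B)) := rfl

lemma PhiMap'_repr (φ : H ⊗[K] B →ₗ[K] B) {h : H} (b : B) (r : Coalgebra.Repr K h (H × H)) :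
    PhiMap' K H B φ (h ⊗ₜ[K] b) =
      ∑ i ∈ r.index, φ (r.left i ⊗ₜ[K] b) *
        HopfAlgebra.antipode (R := K) (uMap K H B φ (r.right i)) := by
  have h0 : PhiMap' K H B φ (h ⊗ₜ[K] b) =
      (LinearMap.mul' K B
        ∘ₗ TensorProduct.map φ (HopfAlgebra.antipode (R := K) ∘ₗ uMap K H B φ)
        ∘ₗ (TensorProduct.assoc K H B H).symm.toLinearMap
        ∘ₗ LinearMap.lTensor H (TensorProduct.comm K H B).toLinearMap
        ∘ₗ (TensorProduct.assoc K H H B).toLinearMap)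
        ((Coalgebra.comul (R := K) h) ⊗ₜ[K] b) := rfl
  rw [h0, ← r.eq, TensorProduct.sum_tmul, map_sum]
  simp only [coe_comp, Function.comp_apply, LinearEquiv.coe_coe, TensorProduct.assoc_tmul,
    lTensor_tmul, TensorProduct.comm_tmul, TensorProduct.assoc_symm_tmul,
    TensorProduct.map_tmul, mul'_apply]

lemma counit_uMap {φ : H ⊗[K] B →ₗ[K] B} (hco : IsCoalgebraMorphism K H B φ) (h : H) :
    Coalgebra.counit (R := K) (uMap K H B φ h) = Coalgebra.counit (R := K) h := by
  rw [uMap_apply', hco.counit_comp, Bialgebra.counit_one, mul_one]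

lemma comul_uMap {φ : H ⊗[K] B →ₗ[K] B} (hco : IsCoalgebraMorphism K H B φ) {h : H}
    (q : Coalgebra.Repr K h (H × H)) :
    Coalgebra.comul (R := K) (uMap K H B φ h) =
      ∑ l ∈ q.index, uMap K H B φ (q.left l) ⊗ₜ[K] uMap K H B φ (q.right l) := by
  rw [uMap_apply', hco.comul_comp, Bialgebra.comul_one, Algebra.TensorProduct.one_def]
  have h1 : (TensorProduct.map φ φ)
      ((TensorProduct.tensorTensorTensorComm K H H B B)
        ((Coalgebra.comul (R := K) h) ⊗ₜ[K] ((1 : B) ⊗ₜ[K] (1 : B)))) =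
      ((TensorProduct.map φ φ)
        ∘ₗ (TensorProduct.tensorTensorTensorComm K H H B B).toLinearMap)
        ((Coalgebra.comul (R := K) h) ⊗ₜ[K] ((1 : B) ⊗ₜ[K] (1 : B))) := rfl
  rw [h1, ← q.eq, TensorProduct.sum_tmul, map_sum]
  simp only [coe_comp, Function.comp_apply, LinearEquiv.coe_coe,
    TensorProduct.tensorTensorTensorComm_tmul, TensorProduct.map_tmul]
  rfl

lemma comul_antipode_uMap {φ : H ⊗[K] B →ₗ[K] B} (hco : IsCoalgebraMorphism K H B φ) {h : H}
    (q : Coalgebra.Repr K h (H × H)) :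
    Coalgebra.comul (R := K) (HopfAlgebra.antipode (R := K) (uMap K H B φ h)) =
      ∑ l ∈ q.index,
        HopfAlgebra.antipode (R := K) (uMap K H B φ (q.right l)) ⊗ₜ[K]
        HopfAlgebra.antipode (R := K) (uMap K H B φ (q.left l)) := by
  rw [HopfAux.comul_antipode (K := K), comul_uMap hco q, map_sum, map_sum]
  simp only [TensorProduct.comm_tmul, TensorProduct.map_tmul]

lemma comul_phi {φ : H ⊗[K] B →ₗ[K] B} (hco : IsCoalgebraMorphism K H B φ)
    {h : H} {b : B} (p : Coalgebra.Repr K h (H × H)) (s : Coalgebra.Repr K b (B × B)) :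
    Coalgebra.comul (R := K) (φ (h ⊗ₜ[K] b)) =
      ∑ j ∈ p.index, ∑ k ∈ s.index,
        φ (p.left j ⊗ₜ[K] s.left k) ⊗ₜ[K] φ (p.right j ⊗ₜ[K] s.right k) := by
  rw [hco.comul_comp]
  have h1 : (TensorProduct.map φ φ)
      ((TensorProduct.tensorTensorTensorComm K H H B B)
        ((Coalgebra.comul (R := K) h) ⊗ₜ[K] (Coalgebra.comul (R := K) b))) =
      ((TensorProduct.map φ φ)
        ∘ₗ (TensorProduct.tensorTensorTensorComm K H H B B).toLinearMap)
        ((Coalgebra.comul (R := K) h) ⊗ₜ[K] (Coalgebra.comul (R := K) b)) := rfl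
  rw [h1, ← p.eq, ← s.eq, TensorProduct.sum_tmul]
  simp only [TensorProduct.tmul_sum, map_sum, coe_comp, Function.comp_apply,
    LinearEquiv.coe_coe, TensorProduct.tensorTensorTensorComm_tmul, TensorProduct.map_tmul]

end Aux

/-- If `(H, B, φ)` is a Hopf bracoid such that `φ` is a coalgebra morphism and `H` is
cocommutative, then `Φ'` is a coalgebra morphism. -/
theorem statement7 (φ : H ⊗[K] B →ₗ[K] B)
    (hbr : IsHopfBracoid K H B φ) (hco : IsCoalgebraMorphism K H B φ)
    (hcoc : IsCocommutative K H) :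
    IsCoalgebraMorphism K H B (PhiMap' K H B φ) := by
  constructor
  · intro h b
    obtain r : Coalgebra.Repr K h (H × H) := Coalgebra.Repr.arbitrary K h
    rw [PhiMap'_repr φ b r, map_sum]
    calc ∑ i ∈ r.index, Coalgebra.counit (R := K)
          (φ (r.left i ⊗ₜ[K] b) * HopfAlgebra.antipode (R := K) (uMap K H B φ (r.right i)))
        = ∑ i ∈ r.index, (Coalgebra.counit (R := K) (r.left i) *
            Coalgebra.counit (R := K) (r.right i)) * Coalgebra.counit (R := K) b := by
          refine Finset.sum_congr rfl fun i _ => ?_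
          rw [Bialgebra.counit_mul, HopfAux.counit_antipode, counit_uMap hco,
            hco.counit_comp]
          ring
      _ = Coalgebra.counit (R := K) h * Coalgebra.counit (R := K) b := by
          rw [← Finset.sum_mul, HopfAux.sum_counit_mul_counit r]
  · intro h b
    obtain r : Coalgebra.Repr K h (H × H) := Coalgebra.Repr.arbitrary K h
    obtain s : Coalgebra.Repr K b (B × B) := Coalgebra.Repr.arbitrary K b
    let p : (i : r.ι) → Coalgebra.Repr K (r.left i) (H × H) := fun i => Coalgebra.Repr.arbitrary K _
    let q : (i : r.ι) → Coalgebra.Repr K (r.right i) (H × H) := fun i => Coalgebra.Repr.arbitrary K _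
    let v : (i : r.ι) → (l : (q i).ι) → Coalgebra.Repr K ((q i).left l) (H × H) :=
      fun i l => Coalgebra.Repr.arbitrary K _
    let N : s.ι → (H ⊗[K] (H ⊗[K] (H ⊗[K] H)) →ₗ[K] B ⊗[K] B) := fun k =>
      TensorProduct.map (LinearMap.mul' K B) (LinearMap.mul' K B)
        ∘ₗ (TensorProduct.assoc K B B (B ⊗[K] B)).symm.toLinearMap
        ∘ₗ TensorProduct.map (φ ∘ₗ (TensorProduct.mk K H B).flip (s.left k))
            (TensorProduct.map (HopfAlgebra.antipode (R := K) ∘ₗ uMap K H B φ)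
              (TensorProduct.map (φ ∘ₗ (TensorProduct.mk K H B).flip (s.right k))
                (HopfAlgebra.antipode (R := K) ∘ₗ uMap K H B φ)))
    have hN : ∀ (k : s.ι) (x y z w : H), N k (x ⊗ₜ[K] (y ⊗ₜ[K] (z ⊗ₜ[K] w))) =
        (φ (x ⊗ₜ[K] s.left k) * HopfAlgebra.antipode (R := K) (uMap K H B φ y)) ⊗ₜ[K]
        (φ (z ⊗ₜ[K] s.right k) * HopfAlgebra.antipode (R := K) (uMap K H B φ w)) := by
      intro k x y z w
      simp only [N, coe_comp, Function.comp_apply, TensorProduct.map_tmul,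
        LinearEquiv.coe_coe, TensorProduct.assoc_symm_tmul, mul'_apply,
        TensorProduct.mk_apply, flip_apply]
    -- step 1 : flip the `q` node
    have step1 : ∀ i ∈ r.index, ∀ j ∈ (p i).index,
        ∑ l ∈ (q i).index,
          (p i).left j ⊗ₜ[K] ((q i).right l ⊗ₜ[K] ((p i).right j ⊗ₜ[K] (q i).left l))
        = ∑ l ∈ (q i).index,
          (p i).left j ⊗ₜ[K] ((q i).left l ⊗ₜ[K] ((p i).right j ⊗ₜ[K] (q i).right l)) := by
      intro i _ j _
      have hf := HopfAux.sum_flip_apply (K := K) hcoc (q i)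
        ((TensorProduct.mk K H (H ⊗[K] (H ⊗[K] H)) ((p i).left j))
          ∘ₗ LinearMap.lTensor H ((TensorProduct.mk K H H) ((p i).right j))
          ∘ₗ (TensorProduct.comm K H H).toLinearMap)
      simpa only [coe_comp, Function.comp_apply, LinearEquiv.coe_coe,
        TensorProduct.comm_tmul, lTensor_tmul, TensorProduct.mk_apply] using hf
    -- step 2 : swap the middle two tensor factors
    have step2 : ∑ i ∈ r.index, ∑ j ∈ (p i).index, ∑ l ∈ (q i).index,
          (p i).left j ⊗ₜ[K] ((q i).left l ⊗ₜ[K] ((p i).right j ⊗ₜ[K] (q i).right l))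
        = ∑ i ∈ r.index, ∑ j ∈ (p i).index, ∑ l ∈ (q i).index,
          (p i).left j ⊗ₜ[K] ((p i).right j ⊗ₜ[K] ((q i).left l ⊗ₜ[K] (q i).right l)) := by
      let σ : H ⊗[K] (H ⊗[K] (H ⊗[K] H)) →ₗ[K] H ⊗[K] (H ⊗[K] (H ⊗[K] H)) :=
        LinearMap.lTensor H ((TensorProduct.assoc K H H H).toLinearMap
          ∘ₗ LinearMap.rTensor H (TensorProduct.comm K H H).toLinearMap
          ∘ₗ (TensorProduct.assoc K H H H).symm.toLinearMap)
      have hσ : ∀ x y z w : H, σ (x ⊗ₜ[K] (y ⊗ₜ[K] (z ⊗ₜ[K] w)))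
          = x ⊗ₜ[K] (z ⊗ₜ[K] (y ⊗ₜ[K] w)) := by
        intro x y z w
        simp only [σ, lTensor_tmul, coe_comp, Function.comp_apply, LinearEquiv.coe_coe,
          TensorProduct.assoc_symm_tmul, rTensor_tmul, TensorProduct.comm_tmul,
          TensorProduct.assoc_tmul]
      have hA := HopfAux.delta4 (K := K) r p q v
      have h2 := congrArg σ hA
      simp only [map_sum, hσ] at h2
      calc ∑ i ∈ r.index, ∑ j ∈ (p i).index, ∑ l ∈ (q i).index,
            (p i).left j ⊗ₜ[K] ((q i).left l ⊗ₜ[K] ((p i).right j ⊗ₜ[K] (q i).right l))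
          = ∑ i ∈ r.index, ∑ l ∈ (q i).index, ∑ m ∈ (v i l).index,
            r.left i ⊗ₜ[K] ((v i l).right m ⊗ₜ[K] ((v i l).left m ⊗ₜ[K] (q i).right l)) := h2
        _ = ∑ i ∈ r.index, ∑ l ∈ (q i).index, ∑ m ∈ (v i l).index,
            r.left i ⊗ₜ[K] ((v i l).left m ⊗ₜ[K] ((v i l).right m ⊗ₜ[K] (q i).right l)) := by
            refine Finset.sum_congr rfl fun i _ => Finset.sum_congr rfl fun l _ => ?_
            have hf := HopfAux.sum_flip_apply (K := K) hcoc (v i l)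
              ((TensorProduct.mk K H (H ⊗[K] (H ⊗[K] H)) (r.left i))
                ∘ₗ LinearMap.lTensor H ((TensorProduct.mk K H H).flip ((q i).right l))
                ∘ₗ (TensorProduct.comm K H H).toLinearMap)
            simpa only [coe_comp, Function.comp_apply, LinearEquiv.coe_coe,
              TensorProduct.comm_tmul, lTensor_tmul, TensorProduct.mk_apply,
              flip_apply] using hf
        _ = ∑ i ∈ r.index, ∑ j ∈ (p i).index, ∑ l ∈ (q i).index,
            (p i).left j ⊗ₜ[K] ((p i).right j ⊗ₜ[K] ((q i).left l ⊗ₜ[K] (q i).right l)) :=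
            hA.symm
    have KEY : ∑ i ∈ r.index, ∑ j ∈ (p i).index, ∑ l ∈ (q i).index,
          (p i).left j ⊗ₜ[K] ((q i).right l ⊗ₜ[K] ((p i).right j ⊗ₜ[K] (q i).left l))
        = ∑ i ∈ r.index, ∑ j ∈ (p i).index, ∑ l ∈ (q i).index,
          (p i).left j ⊗ₜ[K] ((p i).right j ⊗ₜ[K] ((q i).left l ⊗ₜ[K] (q i).right l)) := by
      rw [← step2]
      exact Finset.sum_congr rfl fun i hi => Finset.sum_congr rfl fun j hj =>
        step1 i hi j hj
    have hL : ∀ i ∈ r.index,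
        Coalgebra.comul (R := K) (φ (r.left i ⊗ₜ[K] b) *
          HopfAlgebra.antipode (R := K) (uMap K H B φ (r.right i)))
        = ∑ j ∈ (p i).index, ∑ k ∈ s.index, ∑ l ∈ (q i).index,
            N k ((p i).left j ⊗ₜ[K] ((q i).right l ⊗ₜ[K]
              ((p i).right j ⊗ₜ[K] (q i).left l))) := by
      intro i _
      rw [Bialgebra.comul_mul, comul_phi hco (p i) s, comul_antipode_uMap hco (q i),
        Finset.sum_mul]
      refine Finset.sum_congr rfl fun j _ => ?_
      rw [Finset.sum_mul_sum]
      refine Finset.sum_congr rfl fun k _ => Finset.sum_congr rfl fun l _ => ?_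
      rw [hN, Algebra.TensorProduct.tmul_mul_tmul]
    have hR : (TensorProduct.map (PhiMap' K H B φ) (PhiMap' K H B φ))
        ((TensorProduct.tensorTensorTensorComm K H H B B)
          ((Coalgebra.comul (R := K) h) ⊗ₜ[K] (Coalgebra.comul (R := K) b)))
        = ∑ i ∈ r.index, ∑ k ∈ s.index, ∑ j ∈ (p i).index, ∑ l ∈ (q i).index,
            N k ((p i).left j ⊗ₜ[K] ((p i).right j ⊗ₜ[K]
              ((q i).left l ⊗ₜ[K] (q i).right l))) := by
      have h1 : (TensorProduct.map (PhiMap' K H B φ) (PhiMap' K H B φ))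
          ((TensorProduct.tensorTensorTensorComm K H H B B)
            ((Coalgebra.comul (R := K) h) ⊗ₜ[K] (Coalgebra.comul (R := K) b))) =
          ((TensorProduct.map (PhiMap' K H B φ) (PhiMap' K H B φ))
            ∘ₗ (TensorProduct.tensorTensorTensorComm K H H B B).toLinearMap)
            ((Coalgebra.comul (R := K) h) ⊗ₜ[K] (Coalgebra.comul (R := K) b)) := rfl
      rw [h1, ← r.eq, ← s.eq, TensorProduct.sum_tmul]
      simp only [TensorProduct.tmul_sum, map_sum, coe_comp, Function.comp_apply,
        LinearEquiv.coe_coe, TensorProduct.tensorTensorTensorComm_tmul,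
        TensorProduct.map_tmul]
      refine Finset.sum_congr rfl fun i _ => Finset.sum_congr rfl fun k _ => ?_
      rw [PhiMap'_repr φ _ (p i), PhiMap'_repr φ _ (q i), TensorProduct.sum_tmul]
      refine Finset.sum_congr rfl fun j _ => ?_
      rw [TensorProduct.tmul_sum]
      exact Finset.sum_congr rfl fun l _ => (hN k _ _ _ _).symm
    rw [PhiMap'_repr φ b r, map_sum, hR]
    calc ∑ i ∈ r.index, Coalgebra.comul (R := K) (φ (r.left i ⊗ₜ[K] b) *
            HopfAlgebra.antipode (R := K) (uMap K H B φ (r.right i)))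
        = ∑ i ∈ r.index, ∑ j ∈ (p i).index, ∑ k ∈ s.index, ∑ l ∈ (q i).index,
            N k ((p i).left j ⊗ₜ[K] ((q i).right l ⊗ₜ[K]
              ((p i).right j ⊗ₜ[K] (q i).left l))) := Finset.sum_congr rfl hL
      _ = ∑ i ∈ r.index, ∑ k ∈ s.index, ∑ j ∈ (p i).index, ∑ l ∈ (q i).index,
            N k ((p i).left j ⊗ₜ[K] ((q i).right l ⊗ₜ[K]
              ((p i).right j ⊗ₜ[K] (q i).left l))) :=
          Finset.sum_congr rfl fun i _ => Finset.sum_comm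
      _ = ∑ k ∈ s.index, ∑ i ∈ r.index, ∑ j ∈ (p i).index, ∑ l ∈ (q i).index,
            N k ((p i).left j ⊗ₜ[K] ((q i).right l ⊗ₜ[K]
              ((p i).right j ⊗ₜ[K] (q i).left l))) := Finset.sum_comm
      _ = ∑ k ∈ s.index, ∑ i ∈ r.index, ∑ j ∈ (p i).index, ∑ l ∈ (q i).index,
            N k ((p i).left j ⊗ₜ[K] ((p i).right j ⊗ₜ[K]
              ((q i).left l ⊗ₜ[K] (q i).right l))) := by
          refine Finset.sum_congr rfl fun k _ => ?_
          have hh := congrArg (N k) KEY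
          simpa only [map_sum] using hh
      _ = ∑ i ∈ r.index, ∑ k ∈ s.index, ∑ j ∈ (p i).index, ∑ l ∈ (q i).index,
            N k ((p i).left j ⊗ₜ[K] ((p i).right j ⊗ₜ[K]
              ((q i).left l ⊗ₜ[K] (q i).right l))) := Finset.sum_comm

end HopfBracoidPaper
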